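/- For any super-operator Φ : L(F) → L(G) and any p ∈ [1, ∞], the supremum defining ‖Φ‖_{1→p} is attained on a rank-one operator: ‖Φ‖_{1→p} = max{‖Φ(|u⟩⟨v|)‖_p : u, v unit vectors in F}. -/

import Mathlib

open scoped ENNReal
open Matrix
open scoped ComplexOrder

noncomputable section

namespace SchattenNotes

/-- The vector of singular values of a matrix. -/
def singVal {m n : Type*} [Fintype m] [Fintype n] [DecidableEq n]
    (X : Matrix m n ℂ) (i : n) : ℝ :=
  Real.sqrt (((Matrix.posSemidef_conjTranspose_mul_self X).1).eigenvalues i)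

/-- The Schatten `p`-norm, for `p ∈ [1, ∞]` encoded as `p : ℝ≥0∞`. -/
def schatten {m n : Type*} [Fintype m] [Fintype n] [DecidableEq n]
    (p : ℝ≥0∞) (X : Matrix m n ℂ) : ℝ :=
  if p = ∞ then ⨆ i, singVal X i
  else (∑ i, singVal X i ^ p.toReal) ^ (1 / p.toReal)

/-- The induced `q → p` super-operator norm. -/
def opNorm {m n : Type*} [Fintype m] [Fintype n] [DecidableEq m] [DecidableEq n]
    (q p : ℝ≥0∞) (Φ : Matrix n n ℂ →ₗ[ℂ] Matrix m m ℂ) : ℝ :=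
  ⨆ X : {X : Matrix n n ℂ // X ≠ 0}, schatten p (Φ X.1) / schatten q X.1

/-- The induced `q → p` super-operator norm restricted to Hermitian inputs. -/
def opNormH {m n : Type*} [Fintype m] [Fintype n] [DecidableEq m] [DecidableEq n]
    (q p : ℝ≥0∞) (Φ : Matrix n n ℂ →ₗ[ℂ] Matrix m m ℂ) : ℝ :=
  ⨆ X : {X : Matrix n n ℂ // X.IsHermitian ∧ X ≠ 0}, schatten p (Φ X.1) / schatten q X.1

/-- The super-operator `Φ ⊗ I_{L(H)}`, where `H` has orthonormal basis indexed by `k`. -/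
def tensorId {m n : Type*} [Fintype m] [Fintype n] (k : Type*) [Fintype k]
    (Φ : Matrix n n ℂ →ₗ[ℂ] Matrix m m ℂ) :
    Matrix (n × k) (n × k) ℂ →ₗ[ℂ] Matrix (m × k) (m × k) ℂ where
  toFun X := fun r s => Φ (fun i j => X (i, r.2) (j, s.2)) r.1 s.1
  map_add' X Y := by
    funext r s
    show Φ ((fun i j => X (i, r.2) (j, s.2)) + fun i j => Y (i, r.2) (j, s.2)) r.1 s.1 = _
    exact congrFun (congrFun (map_add Φ _ _) r.1) s.1
  map_smul' c X := by
    funext r s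
    show Φ (c • fun i j => X (i, r.2) (j, s.2)) r.1 s.1 = _
    exact congrFun (congrFun (_root_.map_smul Φ c _) r.1) s.1

/-- Complete positivity of a super-operator. -/
def IsCP {m n : Type*} [Fintype m] [Fintype n]
    (Φ : Matrix n n ℂ →ₗ[ℂ] Matrix m m ℂ) : Prop :=
  ∀ (k : ℕ) (X : Matrix (n × Fin k) (n × Fin k) ℂ),
    X.PosSemidef → (tensorId (Fin k) Φ X).PosSemidef

/-- Trace preservation of a super-operator. -/
def IsTP {m n : Type*} [Fintype m] [Fintype n]
    (Φ : Matrix n n ℂ →ₗ[ℂ] Matrix m m ℂ) : Prop :=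
  ∀ X : Matrix n n ℂ, (Φ X).trace = X.trace

/-- The rank-one operator `|u⟩⟨v|`. -/
def outer {m n : Type*} (u : m → ℂ) (v : n → ℂ) : Matrix m n ℂ :=
  Matrix.vecMulVec u (star v)

/-- The quadratic form `⟨a|X|a⟩`. -/
def sand {n : Type*} [Fintype n] (a : n → ℂ) (X : Matrix n n ℂ) : ℂ :=
  star a ⬝ᵥ X *ᵥ a

/-- A unit vector. -/
def IsUnit' {n : Type*} [Fintype n] (u : n → ℂ) : Prop := star u ⬝ᵥ u = 1

/-!
Write `X = ∑ⱼ sⱼ |lⱼ⟩⟨rⱼ|` (singular value decomposition), so that `‖X‖₁ = ∑ⱼ sⱼ`. Convexity of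
`‖·‖ₚ` gives `‖Φ X‖ₚ ≤ ∑ⱼ sⱼ ‖Φ |lⱼ⟩⟨rⱼ|‖ₚ ≤ ‖X‖₁ M`, where `M` is the maximum of `‖Φ |u⟩⟨v|‖ₚ`
over unit vectors `u, v`. The maximum exists because the unit sphere is compact and `‖·‖ₚ`, being
convex on a finite-dimensional space, is continuous. Conversely `‖ |u⟩⟨v| ‖₁ ≤ 1`.

Convexity of `‖·‖ₚ`: if `Y` has singular vectors `lⱼ, rⱼ`, then `sⱼ(Y) = |⟨lⱼ|Y|rⱼ⟩|`. For any
`A`, AM-GM bounds `|⟨lⱼ|A|rⱼ⟩|` by `∑ₖ wⱼₖ sₖ(A)` with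
`wⱼₖ = (|⟨lⱼ|lₖ(A)⟩|² + |⟨rₖ(A)|rⱼ⟩|²) / 2`, and by Bessel's inequality `w` is doubly
substochastic, hence a contraction of `ℓᵖ`. So `(|⟨lⱼ|A|rⱼ⟩|)ⱼ` has `ℓᵖ` norm at most `‖A‖ₚ`, and
Minkowski's inequality in `ℓᵖ` finishes.
-/

section Vectors

variable {n : Type*} [Fintype n]

lemma star_dotProduct_eq_inner (x y : n → ℂ) :
    star x ⬝ᵥ y = inner ℂ (WithLp.toLp 2 x : EuclideanSpace ℂ n) (WithLp.toLp 2 y) := by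
  rw [EuclideanSpace.inner_toLp_toLp, dotProduct_comm]

lemma norm_star_dotProduct_comm (x y : n → ℂ) : ‖star x ⬝ᵥ y‖ = ‖star y ⬝ᵥ x‖ := by
  rw [star_dotProduct_eq_inner, star_dotProduct_eq_inner, norm_inner_symm]

lemma isUnit'_iff_norm_toLp_eq_one (u : n → ℂ) :
    IsUnit' u ↔ ‖(WithLp.toLp 2 u : EuclideanSpace ℂ n)‖ = 1 := by
  rw [IsUnit', star_dotProduct_eq_inner, inner_self_eq_norm_sq_to_K, ← RCLike.ofReal_pow,
    ← RCLike.ofReal_one, RCLike.ofReal_inj]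
  exact pow_eq_one_iff_of_nonneg (norm_nonneg (WithLp.toLp 2 u : EuclideanSpace ℂ n)) two_ne_zero

lemma isCompact_setOf_isUnit' : IsCompact {u : n → ℂ | IsUnit' u} := by
  have h : {u : n → ℂ | IsUnit' u} = WithLp.ofLp '' Metric.sphere (0 : EuclideanSpace ℂ n) 1 := by
    ext u
    rw [Set.mem_ofPred_eq, isUnit'_iff_norm_toLp_eq_one]
    exact ⟨fun h => ⟨_, by simpa using h, rfl⟩, by rintro ⟨x, hx, rfl⟩; simpa using hx⟩
  rw [h]
  exact (isCompact_sphere 0 1).image (PiLp.continuous_ofLp 2 _)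

def OrthonormalOn {ι : Type*} [DecidableEq ι] (s : Finset ι) (a : ι → n → ℂ) : Prop :=
  ∀ i ∈ s, ∀ j ∈ s, star (a i) ⬝ᵥ a j = if i = j then 1 else 0

lemma OrthonormalOn.isUnit' {ι : Type*} [DecidableEq ι] {s : Finset ι} {a : ι → n → ℂ}
    (ha : OrthonormalOn s a) {i : ι} (hi : i ∈ s) : IsUnit' (a i) := by
  simpa [IsUnit'] using ha i hi i hi

lemma OrthonormalOn.sum_norm_sq_le_one {ι : Type*} [DecidableEq ι] {s : Finset ι}
    {a : ι → n → ℂ} (ha : OrthonormalOn s a) {x : n → ℂ} (hx : IsUnit' x) :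
    ∑ i ∈ s, ‖star (a i) ⬝ᵥ x‖ ^ 2 ≤ 1 := by
  have ho : Orthonormal ℂ fun i : s => (WithLp.toLp 2 (a i) : EuclideanSpace ℂ n) := by
    rw [orthonormal_iff_ite]
    intro i j
    rw [← star_dotProduct_eq_inner, ha i i.2 j j.2]
    exact if_congr Subtype.ext_iff.symm rfl rfl
  have hb := ho.sum_inner_products_le (s := Finset.univ) (WithLp.toLp 2 x)
  rw [(isUnit'_iff_norm_toLp_eq_one x).1 hx, one_pow] at hb
  rw [← Finset.sum_coe_sort]
  simpa only [star_dotProduct_eq_inner] using hb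

lemma outer_mulVec (u v x : n → ℂ) : outer u v *ᵥ x = (star v ⬝ᵥ x) • u := by
  ext i
  simp only [mulVec, dotProduct, outer, vecMulVec_apply, Pi.smul_apply, smul_eq_mul,
    Finset.sum_mul]
  exact Finset.sum_congr rfl fun j _ => by ring

lemma outer_ne_zero {u v : n → ℂ} (hu : IsUnit' u) (hv : IsUnit' v) : outer u v ≠ 0 := by
  intro h
  have hu0 : u = 0 := by
    simpa [outer_mulVec, show star v ⬝ᵥ v = 1 from hv] using congrArg (· *ᵥ v) h
  simp [IsUnit', hu0] at hu

end Vectors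

lemma rpow_sum_mul_le_sum_mul_rpow {ι : Type*} (s : Finset ι) {p : ℝ} (hp : 1 ≤ p)
    {w x : ι → ℝ} (hw : ∀ i, 0 ≤ w i) (hx : ∀ i, 0 ≤ x i) (hs : ∑ i ∈ s, w i ≤ 1) :
    (∑ i ∈ s, w i * x i) ^ p ≤ ∑ i ∈ s, w i * x i ^ p := by
  have hp0 : 0 < p := by linarith
  have hpow : 0 ≤ ∑ i ∈ s, w i * x i ^ p :=
    Finset.sum_nonneg fun i _ => mul_nonneg (hw i) (Real.rpow_nonneg (hx i) p)
  have holder := Real.inner_le_weight_mul_Lp_of_nonneg s hp w x hw hx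
  have hW : (∑ i ∈ s, w i) ^ (1 - p⁻¹) ≤ 1 :=
    Real.rpow_le_one (Finset.sum_nonneg fun i _ => hw i) hs
      (sub_nonneg.2 (inv_le_one_of_one_le₀ hp))
  calc (∑ i ∈ s, w i * x i) ^ p
      ≤ ((∑ i ∈ s, w i * x i ^ p) ^ p⁻¹) ^ p :=
        Real.rpow_le_rpow (Finset.sum_nonneg fun i _ => mul_nonneg (hw i) (hx i))
          (holder.trans (mul_le_of_le_one_left (Real.rpow_nonneg hpow _) hW)) hp0.le
    _ = ∑ i ∈ s, w i * x i ^ p := Real.rpow_inv_rpow hpow hp0.ne'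

lemma norm_toLp_le_of_substochastic {ι κ E F : Type*} [Fintype ι] [Fintype κ]
    [SeminormedAddCommGroup E] [SeminormedAddCommGroup F] {p : ℝ≥0∞} (hp : 1 ≤ p)
    (R : ι → κ → ℝ) (hR : ∀ i k, 0 ≤ R i k) (hrow : ∀ i, ∑ k, R i k ≤ 1)
    (hcol : ∀ k, ∑ i, R i k ≤ 1) {y : ι → E} {x : κ → F}
    (hyx : ∀ i, ‖y i‖ ≤ ∑ k, R i k * ‖x k‖) :
    ‖WithLp.toLp p y‖ ≤ ‖WithLp.toLp p x‖ := by
  rcases eq_or_ne p ∞ with rfl | hp'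
  · refine Real.iSup_le (fun i => (hyx i).trans ?_) (norm_nonneg _)
    calc ∑ k, R i k * ‖x k‖ ≤ ∑ k, R i k * ‖WithLp.toLp ∞ x‖ :=
          Finset.sum_le_sum fun k _ =>
            mul_le_mul_of_nonneg_left (PiLp.norm_apply_le (WithLp.toLp ∞ x) k) (hR i k)
      _ = (∑ k, R i k) * ‖WithLp.toLp ∞ x‖ := (Finset.sum_mul ..).symm
      _ ≤ ‖WithLp.toLp ∞ x‖ := mul_le_of_le_one_left (norm_nonneg _) (hrow i)
  · have hpr : 1 ≤ p.toReal := by simpa using ENNReal.toReal_mono hp' hp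
    have hpr0 : 0 < p.toReal := by linarith
    rw [PiLp.norm_eq_sum hpr0, PiLp.norm_eq_sum hpr0]
    refine Real.rpow_le_rpow (Finset.sum_nonneg fun i _ => by positivity) ?_ (by positivity)
    calc ∑ i, ‖y i‖ ^ p.toReal ≤ ∑ i, (∑ k, R i k * ‖x k‖) ^ p.toReal :=
          Finset.sum_le_sum fun i _ => Real.rpow_le_rpow (norm_nonneg _) (hyx i) hpr0.le
      _ ≤ ∑ i, ∑ k, R i k * ‖x k‖ ^ p.toReal :=
          Finset.sum_le_sum fun i _ => rpow_sum_mul_le_sum_mul_rpow _ hpr (hR i)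
            (fun k => norm_nonneg _) (hrow i)
      _ = ∑ k, (∑ i, R i k) * ‖x k‖ ^ p.toReal := by
          rw [Finset.sum_comm]; simp only [Finset.sum_mul]
      _ ≤ ∑ k, ‖x k‖ ^ p.toReal :=
          Finset.sum_le_sum fun k _ => mul_le_of_le_one_left (by positivity) (hcol k)

lemma norm_toLp_le_norm_toLp {ι E F : Type*} [Fintype ι] [SeminormedAddCommGroup E]
    [SeminormedAddCommGroup F] {p : ℝ≥0∞} (hp : 1 ≤ p) {y : ι → E} {x : ι → F}
    (hyx : ∀ i, ‖y i‖ ≤ ‖x i‖) :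
    ‖WithLp.toLp p y‖ ≤ ‖WithLp.toLp p x‖ := by
  classical
  exact norm_toLp_le_of_substochastic hp (fun i k => if i = k then 1 else 0)
    (fun _ _ => by positivity) (fun _ => by simp) (fun _ => by simp) (fun i => by simpa using hyx i)

section SingularValueDecomposition

variable {n : Type*} [Fintype n] [DecidableEq n]

lemma singVal_nonneg (X : Matrix n n ℂ) (j : n) : 0 ≤ singVal X j := Real.sqrt_nonneg _

def rightSingVec (X : Matrix n n ℂ) (j : n) : n → ℂ :=
  WithLp.ofLp ((posSemidef_conjTranspose_mul_self X).1.eigenvectorBasis j)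

/-- Where `singVal X j = 0` the left singular vector is chosen to be the right one, so the left
singular vectors are orthonormal only on `singValSupport X`. -/
def leftSingVec (X : Matrix n n ℂ) (j : n) : n → ℂ :=
  if singVal X j = 0 then rightSingVec X j else (singVal X j : ℂ)⁻¹ • (X *ᵥ rightSingVec X j)

def singValSupport (X : Matrix n n ℂ) : Finset n := Finset.univ.filter (singVal X · ≠ 0)

lemma mem_singValSupport {X : Matrix n n ℂ} {j : n} : j ∈ singValSupport X ↔ singVal X j ≠ 0 := by
  simp [singValSupport]

lemma orthonormalOn_rightSingVec (X : Matrix n n ℂ) (s : Finset n) :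
    OrthonormalOn s (rightSingVec X) := by
  intro i _ j _
  have h := (posSemidef_conjTranspose_mul_self X).1.eigenvectorBasis.orthonormal
  rw [orthonormal_iff_ite] at h
  rw [← h i j, EuclideanSpace.inner_eq_star_dotProduct, dotProduct_comm]
  rfl

lemma isUnit'_rightSingVec (X : Matrix n n ℂ) (j : n) : IsUnit' (rightSingVec X j) := by
  simpa [IsUnit'] using orthonormalOn_rightSingVec X {j} j (by simp) j (by simp)

lemma star_mulVec_rightSingVec_dotProduct (X : Matrix n n ℂ) (i j : n) :
    star (X *ᵥ rightSingVec X i) ⬝ᵥ (X *ᵥ rightSingVec X j)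
      = ((singVal X j ^ 2 : ℝ) : ℂ) * (if i = j then 1 else 0) := by
  have hA := posSemidef_conjTranspose_mul_self X
  have heig : (Xᴴ * X) *ᵥ rightSingVec X j = (singVal X j ^ 2) • rightSingVec X j := by
    rw [singVal, Real.sq_sqrt (hA.eigenvalues_nonneg j)]
    exact hA.1.mulVec_eigenvectorBasis j
  rw [star_mulVec, ← dotProduct_mulVec, mulVec_mulVec, heig, dotProduct_smul,
    orthonormalOn_rightSingVec X {i, j} i (by simp) j (by simp), Complex.real_smul]

lemma mulVec_rightSingVec (X : Matrix n n ℂ) (j : n) :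
    X *ᵥ rightSingVec X j = (singVal X j : ℂ) • leftSingVec X j := by
  by_cases h : singVal X j = 0
  · have h0 : star (X *ᵥ rightSingVec X j) ⬝ᵥ (X *ᵥ rightSingVec X j) = 0 := by
      rw [star_mulVec_rightSingVec_dotProduct, h]; simp
    rw [dotProduct_star_self_eq_zero.mp h0, h]
    simp
  · rw [leftSingVec, if_neg h, smul_smul, mul_inv_cancel₀ (Complex.ofReal_ne_zero.mpr h),
      one_smul]

lemma star_leftSingVec_dotProduct {X : Matrix n n ℂ} {i j : n} (hi : singVal X i ≠ 0)
    (hj : singVal X j ≠ 0) :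
    star (leftSingVec X i) ⬝ᵥ leftSingVec X j = if i = j then 1 else 0 := by
  rw [leftSingVec, leftSingVec, if_neg hi, if_neg hj, star_smul, smul_dotProduct,
    dotProduct_smul, star_mulVec_rightSingVec_dotProduct]
  split_ifs with h
  · subst h
    have hs : (singVal X i : ℂ) ≠ 0 := Complex.ofReal_ne_zero.mpr hi
    simp [field]
  · simp

lemma orthonormalOn_leftSingVec (X : Matrix n n ℂ) :
    OrthonormalOn (singValSupport X) (leftSingVec X) := fun _ hi _ hj =>
  star_leftSingVec_dotProduct (mem_singValSupport.1 hi) (mem_singValSupport.1 hj)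

lemma isUnit'_leftSingVec (X : Matrix n n ℂ) (j : n) : IsUnit' (leftSingVec X j) := by
  by_cases h : singVal X j = 0
  · rw [leftSingVec, if_pos h]
    exact isUnit'_rightSingVec X j
  · simpa [IsUnit'] using star_leftSingVec_dotProduct h h

lemma sum_rightSingVec_mul_star (X : Matrix n n ℂ) (r c : n) :
    ∑ j, rightSingVec X j r * star (rightSingVec X j c) = if r = c then 1 else 0 := by
  have hU := Matrix.mem_unitaryGroup_iff.mp
    (posSemidef_conjTranspose_mul_self X).1.eigenvectorUnitary.2
  have h := congrFun (congrFun hU r) c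
  rw [Matrix.mul_apply, Matrix.one_apply] at h
  exact h

theorem eq_sum_singVal_smul_outer (X : Matrix n n ℂ) :
    X = ∑ j, (singVal X j : ℂ) • outer (leftSingVec X j) (rightSingVec X j) := by
  have h : ∀ j, (singVal X j : ℂ) • outer (leftSingVec X j) (rightSingVec X j)
      = outer (X *ᵥ rightSingVec X j) (rightSingVec X j) := fun j => by
    rw [mulVec_rightSingVec, outer, outer, smul_vecMulVec]
  simp_rw [h]
  ext r c
  simp only [Matrix.sum_apply, outer, vecMulVec_apply, mulVec, dotProduct, Finset.sum_mul,
    Pi.star_apply]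
  rw [Finset.sum_comm]
  simp_rw [mul_assoc, ← Finset.mul_sum, sum_rightSingVec_mul_star]
  simp

lemma singVal_eq_norm_dotProduct (X : Matrix n n ℂ) (j : n) :
    singVal X j = ‖star (leftSingVec X j) ⬝ᵥ X *ᵥ rightSingVec X j‖ := by
  rw [mulVec_rightSingVec, dotProduct_smul, isUnit'_leftSingVec X j, smul_eq_mul, mul_one,
    Complex.norm_real, Real.norm_of_nonneg (singVal_nonneg X j)]

lemma star_dotProduct_mulVec_eq_sum (X : Matrix n n ℂ) (a b : n → ℂ) :
    star a ⬝ᵥ X *ᵥ b = ∑ k ∈ singValSupport X,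
      (singVal X k : ℂ) * ((star a ⬝ᵥ leftSingVec X k) * (star (rightSingVec X k) ⬝ᵥ b)) := by
  conv_lhs => rw [eq_sum_singVal_smul_outer X]
  rw [Matrix.sum_mulVec, dotProduct_sum, singValSupport, Finset.sum_filter]
  refine Finset.sum_congr rfl fun k _ => ?_
  split_ifs with hk
  · rw [smul_mulVec, outer_mulVec, dotProduct_smul, dotProduct_smul, smul_eq_mul, smul_eq_mul]
    ring
  · simp [not_not.1 hk]

def svdWeight (X : Matrix n n ℂ) (a b : n → ℂ) (k : n) : ℝ :=
  (‖star a ⬝ᵥ leftSingVec X k‖ ^ 2 + ‖star (rightSingVec X k) ⬝ᵥ b‖ ^ 2) / 2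

lemma svdWeight_nonneg (X : Matrix n n ℂ) (a b : n → ℂ) (k : n) : 0 ≤ svdWeight X a b k := by
  unfold svdWeight; positivity

lemma norm_star_dotProduct_mulVec_le (X : Matrix n n ℂ) (a b : n → ℂ) :
    ‖star a ⬝ᵥ X *ᵥ b‖ ≤ ∑ k ∈ singValSupport X, svdWeight X a b k * singVal X k := by
  rw [star_dotProduct_mulVec_eq_sum]
  refine (norm_sum_le _ _).trans (Finset.sum_le_sum fun k _ => ?_)
  rw [norm_mul, norm_mul, Complex.norm_real, Real.norm_of_nonneg (singVal_nonneg X k), mul_comm]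
  refine mul_le_mul_of_nonneg_right ?_ (singVal_nonneg X k)
  unfold svdWeight
  linarith [two_mul_le_add_sq ‖star a ⬝ᵥ leftSingVec X k‖ ‖star (rightSingVec X k) ⬝ᵥ b‖]

lemma sum_svdWeight_le_one (X : Matrix n n ℂ) {a b : n → ℂ} (ha : IsUnit' a) (hb : IsUnit' b) :
    ∑ k ∈ singValSupport X, svdWeight X a b k ≤ 1 := by
  have hl := (orthonormalOn_leftSingVec X).sum_norm_sq_le_one ha
  have hr := (orthonormalOn_rightSingVec X (singValSupport X)).sum_norm_sq_le_one hb
  simp_rw [norm_star_dotProduct_comm (leftSingVec X _)] at hl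
  unfold svdWeight
  rw [← Finset.sum_div, Finset.sum_add_distrib]
  linarith

lemma sum_svdWeight_family_le_one (X : Matrix n n ℂ) {ι : Type*} [DecidableEq ι] {t : Finset ι}
    {a b : ι → n → ℂ} (ha : OrthonormalOn t a) (hb : OrthonormalOn t b) (k : n) :
    ∑ i ∈ t, svdWeight X (a i) (b i) k ≤ 1 := by
  have hl := ha.sum_norm_sq_le_one (isUnit'_leftSingVec X k)
  have hr := hb.sum_norm_sq_le_one (isUnit'_rightSingVec X k)
  simp_rw [norm_star_dotProduct_comm (b _)] at hr
  unfold svdWeight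
  rw [← Finset.sum_div, Finset.sum_add_distrib]
  linarith

end SingularValueDecomposition

section Schatten

variable {n : Type*} [Fintype n] [DecidableEq n]

lemma schatten_eq_norm_toLp {p : ℝ≥0∞} (hp : 1 ≤ p) (X : Matrix n n ℂ) :
    schatten p X = ‖WithLp.toLp p (singVal X)‖ := by
  rw [schatten]
  split_ifs with hp'
  · subst hp'
    simp only [PiLp.norm_eq_ciSup, Real.norm_of_nonneg (singVal_nonneg X _)]
  · have hpr : 0 < p.toReal := ENNReal.toReal_pos (one_pos.trans_le hp).ne' hp'
    simp only [PiLp.norm_eq_sum hpr, Real.norm_of_nonneg (singVal_nonneg X _)]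

lemma schatten_nonneg (p : ℝ≥0∞) (X : Matrix n n ℂ) : 0 ≤ schatten p X := by
  rw [schatten]
  split_ifs
  · exact Real.iSup_nonneg (singVal_nonneg X)
  · exact Real.rpow_nonneg (Finset.sum_nonneg fun i _ => Real.rpow_nonneg (singVal_nonneg X i) _) _

lemma schatten_one (X : Matrix n n ℂ) : schatten 1 X = ∑ j, singVal X j := by
  simp [schatten]

lemma norm_toLp_diag_le_schatten {p : ℝ≥0∞} (hp : 1 ≤ p) (A : Matrix n n ℂ) {ι : Type*}
    [Fintype ι] [DecidableEq ι] {t : Finset ι} {a b : ι → n → ℂ} (ha : OrthonormalOn t a)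
    (hb : OrthonormalOn t b) :
    ‖WithLp.toLp p fun i => if i ∈ t then ‖star (a i) ⬝ᵥ A *ᵥ b i‖ else 0‖ ≤ schatten p A := by
  rw [schatten_eq_norm_toLp hp]
  refine norm_toLp_le_of_substochastic hp
    (fun i k => if i ∈ t then if k ∈ singValSupport A then svdWeight A (a i) (b i) k else 0
      else 0) (fun i k => by split_ifs <;> simp [svdWeight_nonneg]) (fun i => ?_)
    (fun k => ?_) (fun i => ?_)
  · split_ifs with hi
    · simpa [Finset.sum_ite_mem] using sum_svdWeight_le_one A (ha.isUnit' hi) (hb.isUnit' hi)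
    · simp
  · by_cases hk : k ∈ singValSupport A
    · simpa [hk, Finset.sum_ite_mem] using sum_svdWeight_family_le_one A ha hb k
    · simp [hk]
  · split_ifs with hi
    · simpa [Finset.sum_ite_mem, Real.norm_of_nonneg (singVal_nonneg A _)] using
        norm_star_dotProduct_mulVec_le A (a i) (b i)
    · simp

theorem schatten_sum_smul_le {p : ℝ≥0∞} (hp : 1 ≤ p) {ι : Type*} [Fintype ι] (c : ι → ℂ)
    (A : ι → Matrix n n ℂ) :
    schatten p (∑ i, c i • A i) ≤ ∑ i, ‖c i‖ * schatten p (A i) := by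
  have : Fact (1 ≤ p) := ⟨hp⟩
  set Y := ∑ i, c i • A i
  set d : ι → n → ℝ := fun i j => if j ∈ singValSupport Y then
    ‖star (leftSingVec Y j) ⬝ᵥ A i *ᵥ rightSingVec Y j‖ else 0
  have hY : ∀ j, ‖singVal Y j‖ ≤ ‖(∑ i, ‖c i‖ • d i) j‖ := by
    intro j
    have hd : ∀ i, 0 ≤ d i j := fun i => by simp only [d]; split_ifs <;> positivity
    simp only [Finset.sum_apply, Pi.smul_apply, smul_eq_mul]
    rw [Real.norm_of_nonneg (singVal_nonneg Y j),
      Real.norm_of_nonneg (Finset.sum_nonneg fun i _ => mul_nonneg (norm_nonneg _) (hd i))]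
    by_cases hj : j ∈ singValSupport Y
    · rw [singVal_eq_norm_dotProduct, Matrix.sum_mulVec, dotProduct_sum]
      refine (norm_sum_le _ _).trans (Finset.sum_le_sum fun i _ => ?_)
      simp [d, hj, smul_mulVec, dotProduct_smul]
    · rw [not_not.1 (mem_singValSupport.not.1 hj)]
      exact Finset.sum_nonneg fun i _ => mul_nonneg (norm_nonneg _) (hd i)
  calc schatten p Y = ‖WithLp.toLp p (singVal Y)‖ := schatten_eq_norm_toLp hp Y
    _ ≤ ‖WithLp.toLp p (∑ i, ‖c i‖ • d i)‖ := norm_toLp_le_norm_toLp hp hY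
    _ ≤ ∑ i, ‖c i‖ * ‖WithLp.toLp p (d i)‖ := by
        rw [WithLp.toLp_sum]
        refine (norm_sum_le _ _).trans_eq (Finset.sum_congr rfl fun i _ => ?_)
        rw [WithLp.toLp_smul, norm_smul, norm_norm]
    _ ≤ ∑ i, ‖c i‖ * schatten p (A i) := by
        gcongr with i
        exact norm_toLp_diag_le_schatten hp (A i) (orthonormalOn_leftSingVec Y)
          (orthonormalOn_rightSingVec Y _)

lemma convexOn_schatten {p : ℝ≥0∞} (hp : 1 ≤ p) :
    ConvexOn ℝ Set.univ (schatten p : Matrix n n ℂ → ℝ) := by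
  refine ⟨convex_univ, fun X _ Y _ a b ha hb _ => ?_⟩
  have h := schatten_sum_smul_le hp ![(a : ℂ), (b : ℂ)] ![X, Y]
  simp only [Fin.sum_univ_two, Matrix.cons_val_zero, Matrix.cons_val_one, Complex.norm_real,
    Real.norm_of_nonneg ha, Real.norm_of_nonneg hb] at h
  simpa [smul_eq_mul] using h

lemma continuous_schatten {p : ℝ≥0∞} (hp : 1 ≤ p) :
    Continuous (schatten p : Matrix n n ℂ → ℝ) := by
  let _ := Matrix.normedAddCommGroup (m := n) (n := n) (α := ℂ)
  let _ := Matrix.normedSpace (R := ℝ) (m := n) (n := n) (α := ℂ)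
  exact (convexOn_schatten hp).locallyLipschitz.continuous

lemma schatten_one_outer_le_one {u v : n → ℂ} (hu : IsUnit' u) (hv : IsUnit' v) :
    schatten 1 (outer u v) ≤ 1 := by
  rw [schatten_one, ← Finset.sum_filter_ne_zero]
  refine le_trans (Finset.sum_le_sum fun j _ => ?_) (sum_svdWeight_le_one (outer u v) hu hv)
  rw [singVal_eq_norm_dotProduct, outer_mulVec, dotProduct_smul, smul_eq_mul, norm_mul,
    mul_comm, norm_star_dotProduct_comm (leftSingVec _ j), norm_star_dotProduct_comm v]
  unfold svdWeight
  linarith [two_mul_le_add_sq ‖star u ⬝ᵥ leftSingVec (outer u v) j‖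
    ‖star (rightSingVec (outer u v) j) ⬝ᵥ v‖]

lemma schatten_one_pos {X : Matrix n n ℂ} (hX : X ≠ 0) : 0 < schatten 1 X := by
  refine (schatten_nonneg 1 X).lt_of_ne fun h => hX ?_
  rw [schatten_one, eq_comm, Finset.sum_eq_zero_iff_of_nonneg fun j _ => singVal_nonneg X j] at h
  rw [eq_sum_singVal_smul_outer X]
  exact Finset.sum_eq_zero fun j hj => by simp [h j hj]

end Schatten

section InducedNorm

variable {m n : Type*} [Fintype m] [Fintype n] [DecidableEq m] [DecidableEq n]
  {p : ℝ≥0∞} (hp : 1 ≤ p) (Φ : Matrix n n ℂ →ₗ[ℂ] Matrix m m ℂ)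

include hp in
lemma exists_forall_schatten_map_outer_le [Nonempty n] :
    ∃ u v : n → ℂ, IsUnit' u ∧ IsUnit' v ∧ ∀ u' v', IsUnit' u' → IsUnit' v' →
      schatten p (Φ (outer u' v')) ≤ schatten p (Φ (outer u v)) := by
  classical
  obtain ⟨i⟩ := ‹Nonempty n›
  have hi : IsUnit' (Pi.single i 1 : n → ℂ) := by simp [IsUnit']
  have houter : Continuous fun w : (n → ℂ) × (n → ℂ) => outer w.1 w.2 :=
    continuous_fst.matrix_vecMulVec (continuous_star.comp continuous_snd)
  have hΦ : Continuous Φ := Φ.continuous_of_finiteDimensional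
  have hcont : Continuous fun w : (n → ℂ) × (n → ℂ) => schatten p (Φ (outer w.1 w.2)) :=
    (continuous_schatten hp).comp (hΦ.comp houter)
  have hne : ({u : n → ℂ | IsUnit' u} ×ˢ {u | IsUnit' u}).Nonempty :=
    ⟨(Pi.single i 1, Pi.single i 1), hi, hi⟩
  obtain ⟨⟨u, v⟩, ⟨hu, hv⟩, hmax⟩ :=
    (isCompact_setOf_isUnit'.prod isCompact_setOf_isUnit').exists_isMaxOn hne hcont.continuousOn
  exact ⟨u, v, hu, hv, fun u' v' hu' hv' => isMaxOn_iff.1 hmax (u', v') ⟨hu', hv'⟩⟩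

variable {Φ} {M : ℝ}
  (hM : ∀ u v, IsUnit' u → IsUnit' v → schatten p (Φ (outer u v)) ≤ M)

include hp hM in
lemma schatten_map_le_schatten_one_mul (X : Matrix n n ℂ) :
    schatten p (Φ X) ≤ schatten 1 X * M := by
  conv_lhs => rw [eq_sum_singVal_smul_outer X, map_sum]
  simp only [map_smul]
  calc _ ≤ ∑ j, ‖(singVal X j : ℂ)‖ * schatten p (Φ (outer (leftSingVec X j) (rightSingVec X j))) :=
        schatten_sum_smul_le hp _ _
    _ ≤ ∑ j, singVal X j * M := Finset.sum_le_sum fun j _ => by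
        rw [Complex.norm_real, Real.norm_of_nonneg (singVal_nonneg X j)]
        exact mul_le_mul_of_nonneg_left
          (hM _ _ (isUnit'_leftSingVec X j) (isUnit'_rightSingVec X j)) (singVal_nonneg X j)
    _ = schatten 1 X * M := by rw [schatten_one, Finset.sum_mul]

include hp hM in
lemma schatten_map_div_schatten_one_le (X : {X : Matrix n n ℂ // X ≠ 0}) :
    schatten p (Φ X.1) / schatten 1 X.1 ≤ M := by
  rw [div_le_iff₀' (schatten_one_pos X.2)]
  exact schatten_map_le_schatten_one_mul hp hM X.1

include hp hM in
lemma opNorm_one_le [Nonempty n] : opNorm 1 p Φ ≤ M :=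
  have : Nonempty {X : Matrix n n ℂ // X ≠ 0} := ⟨⟨1, one_ne_zero⟩⟩
  ciSup_le (schatten_map_div_schatten_one_le hp hM)

include hp hM in
lemma schatten_map_outer_le_opNorm {u v : n → ℂ} (hu : IsUnit' u) (hv : IsUnit' v) :
    schatten p (Φ (outer u v)) ≤ opNorm 1 p Φ :=
  calc schatten p (Φ (outer u v))
      ≤ schatten p (Φ (outer u v)) / schatten 1 (outer u v) :=
        le_div_self (schatten_nonneg p _) (schatten_one_pos (outer_ne_zero hu hv))
          (schatten_one_outer_le_one hu hv)
    _ ≤ opNorm 1 p Φ :=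
        le_ciSup (f := fun X : {X : Matrix n n ℂ // X ≠ 0} => schatten p (Φ X.1) / schatten 1 X.1)
          ⟨M, Set.forall_mem_range.2 (schatten_map_div_schatten_one_le hp hM)⟩ ⟨_, outer_ne_zero hu hv⟩

end InducedNorm

/-- The `1 → p` norm is attained on a rank-one operator `|u⟩⟨v|` with `u, v` unit vectors. -/
theorem stmt8 {dF dG : ℕ} (hF : 0 < dF) (Φ : Matrix (Fin dF) (Fin dF) ℂ →ₗ[ℂ] Matrix (Fin dG) (Fin dG) ℂ) (p : ℝ≥0∞) (hp : 1 ≤ p) :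
    ∃ u v : Fin dF → ℂ, IsUnit' u ∧ IsUnit' v ∧
      opNorm 1 p Φ = schatten p (Φ (outer u v)) ∧
      ∀ u' v' : Fin dF → ℂ, IsUnit' u' → IsUnit' v' →
        schatten p (Φ (outer u' v')) ≤ opNorm 1 p Φ := by
  have : Nonempty (Fin dF) := ⟨⟨0, hF⟩⟩
  obtain ⟨u, v, hu, hv, hmax⟩ := exists_forall_schatten_map_outer_le hp Φ
  have hle := schatten_map_outer_le_opNorm hp hmax hu hv
  exact ⟨u, v, hu, hv, (opNorm_one_le hp hmax).antisymm hle,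
    fun u' v' hu' hv' => (hmax u' v' hu' hv').trans hle⟩

end SchattenNotes
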